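/- arXiv:1206.1903 — 5 statements merged into one kernel-verified Lean document; each statement's English description precedes it below -/
import Mathlib

section
/- In a single-winner stochastic resource auction among N players, where each player i's generation is a random variable X_i on [0,1] with true CDF F_i, the winner i' is the player with the highest reported expected generation ∫x dF̂_i(x), the marginal loser i'' is the player (other than i') with the highest reported expected generation, and the winner's payoff is U = X_{i'} − ∫x dF̂_{i''}(x) (all losers get payoff 0): then for every player, reporting the true distribution maximizes expected payoff regardless of the other players' reports (the SVCG mechanism is dominant-strategy incentive compatible). -/
/-!
In a second-price rule the price the winner pays is the highest competing bid, which does not depend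
on the winner's own report. Hence misreporting can only change whether player `i` wins, not what a win
costs: truthful reporting wins exactly when the value is at least the highest competing bid, i.e.
exactly when winning is profitable.
-/

open MeasureTheory

noncomputable def ev (μ : Measure ℝ) : ℝ := ∫ x, x ∂μ

namespace SecondPrice

variable {ι α : Type*} [DecidableEq ι]

structure IsRule (v : α → ℝ) (winner loser : (ι → α) → ι) : Prop where
  le_winner : ∀ (P : ι → α) j, v (P j) ≤ v (P (winner P))
  loser_ne_winner : ∀ P : ι → α, loser P ≠ winner P
  le_loser : ∀ (P : ι → α) j, j ≠ winner P → v (P j) ≤ v (P (loser P))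

/-- `a` is the true type of player `i`, which may differ from his report `P i`. -/
def utility (v : α → ℝ) (winner loser : (ι → α) → ι) (i : ι) (a : α) (P : ι → α) : ℝ :=
  if winner P = i then v a - v (P (loser P)) else 0

variable {v : α → ℝ} {winner loser : (ι → α) → ι}

theorem update_apply_loser_of_winner_eq (h : IsRule v winner loser) {R : ι → α} {i : ι} {a : α}
    (hw : winner (Function.update R i a) = i) :
    Function.update R i a (loser (Function.update R i a)) = R (loser (Function.update R i a)) :=
  Function.update_of_ne (fun heq => h.loser_ne_winner _ (heq.trans hw.symm)) a R

theorem price_le_of_winner_update_eq (h : IsRule v winner loser) {R : ι → α} {i : ι} {a : α}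
    (hw : winner (Function.update R i a) = i) :
    v (R (loser (Function.update R i a))) ≤ v a := by
  have := h.le_winner (Function.update R i a) (loser (Function.update R i a))
  rwa [update_apply_loser_of_winner_eq h hw, hw, Function.update_self] at this

theorem utility_le_of_winner_update_eq (h : IsRule v winner loser) {R : ι → α} {i : ι} {a : α}
    (hw : winner (Function.update R i a) = i) :
    utility v winner loser i a R ≤ utility v winner loser i a (Function.update R i a) := by
  have hprice := price_le_of_winner_update_eq h hw
  rw [utility, utility, if_pos hw, update_apply_loser_of_winner_eq h hw]
  split_ifs with hwR
  · have hloser_ne : loser (Function.update R i a) ≠ winner R :=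
      fun heq => h.loser_ne_winner _ (heq.trans (hwR.trans hw.symm))
    linarith [h.le_loser R _ hloser_ne]
  · linarith

theorem utility_nonpos_of_winner_update_ne (h : IsRule v winner loser) {R : ι → α} {i : ι}
    {a : α} (hw : winner (Function.update R i a) ≠ i) : utility v winner loser i a R ≤ 0 := by
  rw [utility]
  split_ifs with hwR
  · have hbeaten : v a ≤ v (R (winner (Function.update R i a))) := by
      have := h.le_winner (Function.update R i a) i
      rwa [Function.update_self, Function.update_of_ne hw] at this
    linarith [h.le_loser R _ fun heq => hw (heq.trans hwR)]
  · exact le_rfl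

theorem utility_le_utility_update_self (h : IsRule v winner loser) (R : ι → α) (i : ι) (a : α) :
    utility v winner loser i a R ≤ utility v winner loser i a (Function.update R i a) := by
  by_cases hw : winner (Function.update R i a) = i
  · exact utility_le_of_winner_update_eq h hw
  · exact (utility_nonpos_of_winner_update_ne h hw).trans_eq (if_neg hw).symm

end SecondPrice

theorem svcg_incentive_compatible_general
    (N : ℕ) (F : Fin N → Measure ℝ)
    -- winner and marginal-loser selection rules, valid for every report profile
    (winner loser : (Fin N → Measure ℝ) → Fin N)
    (hwinner : ∀ P : Fin N → Measure ℝ, ∀ j, ev (P j) ≤ ev (P (winner P)))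
    (hloser : ∀ P : Fin N → Measure ℝ, loser P ≠ winner P ∧
      ∀ j, j ≠ winner P → ev (P j) ≤ ev (P (loser P)))
    -- expected payoff of player i (with true distribution F i) in report profile P:
    -- the winner pays the marginal loser's reported expectation up front and
    -- receives his realized generation (in expectation, ev (F i)); losers get 0
    (payoff : Fin N → (Fin N → Measure ℝ) → ℝ)
    (hpayoff : ∀ i P, payoff i P =
      if winner P = i then ev (F i) - ev (P (loser P)) else 0)
    -- an arbitrary report profile: R j is any report of player j (R i a deviation)
    (R : Fin N → Measure ℝ)
    (i : Fin N) :
    payoff i R ≤ payoff i (Function.update R i (F i)) := by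
  have hrule : SecondPrice.IsRule ev winner loser :=
    ⟨hwinner, fun P => (hloser P).1, fun P => (hloser P).2⟩
  have hutility : ∀ P, payoff i P = SecondPrice.utility ev winner loser i (F i) P :=
    fun P => hpayoff i P
  rw [hutility, hutility]
  exact SecondPrice.utility_le_utility_update_self hrule R i (F i)

/-- The SVCG mechanism is dominant-strategy incentive compatible:
for every player, reporting the true distribution maximizes expected payoff
regardless of the other players' reports. -/
theorem svcg_incentive_compatible
    (N : ℕ) (F : Fin N → Measure ℝ)
    (hFprob : ∀ i, IsProbabilityMeasure (F i))
    (hFsupp : ∀ i, (F i) (Set.Icc (0:ℝ) 1)ᶜ = 0)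
    -- winner and marginal-loser selection rules, valid for every report profile
    (winner loser : (Fin N → Measure ℝ) → Fin N)
    (hwinner : ∀ P : Fin N → Measure ℝ, ∀ j, ev (P j) ≤ ev (P (winner P)))
    (hloser : ∀ P : Fin N → Measure ℝ, loser P ≠ winner P ∧
      ∀ j, j ≠ winner P → ev (P j) ≤ ev (P (loser P)))
    -- expected payoff of player i (with true distribution F i) in report profile P:
    -- the winner pays the marginal loser's reported expectation up front and
    -- receives his realized generation (in expectation, ev (F i)); losers get 0
    (payoff : Fin N → (Fin N → Measure ℝ) → ℝ)
    (hpayoff : ∀ i P, payoff i P =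
      if winner P = i then ev (F i) - ev (P (loser P)) else 0)
    -- an arbitrary report profile: R j is any report of player j (R i a deviation)
    (R : Fin N → Measure ℝ)
    (hRprob : ∀ i, IsProbabilityMeasure (R i))
    (hRsupp : ∀ i, (R i) (Set.Icc (0:ℝ) 1)ᶜ = 0)
    (i : Fin N) :
    payoff i R ≤ payoff i (Function.update R i (F i)) :=
  svcg_incentive_compatible_general N F winner loser hwinner hloser payoff hpayoff R i
end

section
/- In the Stochastic Shortfall Penalty (SSP) auction—where the winner i' is the player with highest reported expected generation, he is paid 1 up front, and after realization pays penalty λ(1 − X_{i'}) with λ = 1/(1 − ∫x dF̂_{i''}(x)), i'' being the marginal loser—truthful reporting of one's distribution is a dominant strategy for every player. -/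
/-!
A second-price argument. When player `i` wins, its expected payoff `sspGain v b =
1 - (1 - v) / (1 - b)` depends on its report only through the fact that it wins: `v` is its
true expected generation and `b` the best competing report. This payoff is nonnegative
exactly when `b ≤ v`, and a truthful `i` wins only if `b ≤ v` and loses only if `v ≤ b`.
So a deviation can only make `i` win when winning does not pay, or lose when it would.
-/

open MeasureTheory

noncomputable def sspGain (v b : ℝ) : ℝ := 1 - 1 / (1 - b) * (1 - v)

theorem sspGain_nonneg {v b : ℝ} (hb : b < 1) (hbv : b ≤ v) : 0 ≤ sspGain v b := by
  have hb' : 0 < 1 - b := sub_pos.2 hb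
  rw [sspGain, sub_nonneg, one_div_mul_eq_div, div_le_one hb']
  linarith

theorem sspGain_nonpos {v b : ℝ} (hb : b < 1) (hvb : v ≤ b) : sspGain v b ≤ 0 := by
  have hb' : 0 < 1 - b := sub_pos.2 hb
  rw [sspGain, sub_nonpos, one_div_mul_eq_div, le_div_iff₀ hb']
  linarith

theorem sspGain_anti {v b b' : ℝ} (hv : v ≤ 1) (hb' : b' < 1) (hbb' : b ≤ b') :
    sspGain v b' ≤ sspGain v b := by
  have hinv : 1 / (1 - b) ≤ 1 / (1 - b') :=
    one_div_le_one_div_of_le (sub_pos.2 hb') (by linarith)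
  have := mul_le_mul_of_nonneg_right hinv (sub_nonneg.2 hv)
  unfold sspGain
  linarith

section Mechanism

variable {ι α : Type*} [DecidableEq ι] (s : α → ℝ) (winner loser : (ι → α) → ι)

noncomputable def sspPayoff (v : ℝ) (i : ι) (P : ι → α) : ℝ :=
  if winner P = i then sspGain v (s (P (loser P))) else 0

theorem sspPayoff_le_update
    (hwinner : ∀ P : ι → α, ∀ j, s (P j) ≤ s (P (winner P)))
    (hloser : ∀ P : ι → α, loser P ≠ winner P ∧
      ∀ j, j ≠ winner P → s (P j) ≤ s (P (loser P)))
    (R : ι → α) (i : ι) (hR : ∀ j, j ≠ i → s (R j) < 1) (a : α) (ha : s a ≤ 1) :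
    sspPayoff s winner loser (s a) i R ≤
      sspPayoff s winner loser (s a) i (Function.update R i a) := by
  set T := Function.update R i a
  have hTi : T i = a := Function.update_self i a R
  have hT : ∀ j, j ≠ i → T j = R j := fun j hj => Function.update_of_ne hj a R
  unfold sspPayoff
  by_cases hwT : winner T = i <;> by_cases hwR : winner R = i <;> simp only [hwT, hwR, if_true]
  · have hlT : loser T ≠ i := hwT ▸ (hloser T).1
    have hlR : loser R ≠ i := hwR ▸ (hloser R).1
    rw [hT _ hlT]
    exact sspGain_anti ha (hR _ hlR) ((hloser R).2 _ (hwR ▸ hlT))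
  · have hlT : loser T ≠ i := hwT ▸ (hloser T).1
    have hwins : s (T (loser T)) ≤ s a := by simpa only [hwT, hTi] using hwinner T (loser T)
    rw [hT _ hlT] at hwins ⊢
    exact sspGain_nonneg (hR _ hlT) hwins
  · have hlR : loser R ≠ i := hwR ▸ (hloser R).1
    have hloses : s a ≤ s (R (winner T)) := by simpa only [hTi, hT _ hwT] using hwinner T i
    exact sspGain_nonpos (hR _ hlR) (hloses.trans ((hloser R).2 _ (hwR ▸ hwT)))
  · exact le_rfl

end Mechanism

theorem ssp_incentive_compatible_general
    (N : ℕ) (F : Fin N → Measure ℝ)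
    (hFlt : ∀ i, ev (F i) < 1)
    (winner loser : (Fin N → Measure ℝ) → Fin N)
    (hwinner : ∀ P : Fin N → Measure ℝ, ∀ j, ev (P j) ≤ ev (P (winner P)))
    (hloser : ∀ P : Fin N → Measure ℝ, loser P ≠ winner P ∧
      ∀ j, j ≠ winner P → ev (P j) ≤ ev (P (loser P)))
    -- expected payoff of player i (true distribution F i) in report profile P:
    -- the winner receives 1 up front and expects to pay λ(1 − E[X_i]);
    -- losers get 0
    (payoff : Fin N → (Fin N → Measure ℝ) → ℝ)
    (hpayoff : ∀ i P, payoff i P =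
      if winner P = i then
        1 - (1 / (1 - ev (P (loser P)))) * (1 - ev (F i))
      else 0)
    -- an arbitrary report profile: R j is any report of player j (R i a deviation)
    (R : Fin N → Measure ℝ)
    (hRlt : ∀ i, ev (R i) < 1)
    (i : Fin N) :
    payoff i R ≤ payoff i (Function.update R i (F i)) := by
  rw [hpayoff, hpayoff]
  exact sspPayoff_le_update ev winner loser hwinner hloser R i (fun j _ => hRlt j) (F i)
    (hFlt i).le

/-- In the SSP mechanism—winner paid 1 up front, paying penalty
λ(1 − X) with λ = 1/(1 − ev of marginal loser's report)—truthful reporting is a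
dominant strategy for every player. -/
theorem ssp_incentive_compatible
    (N : ℕ) (F : Fin N → Measure ℝ)
    (hFprob : ∀ i, IsProbabilityMeasure (F i))
    (hFsupp : ∀ i, (F i) (Set.Icc (0:ℝ) 1)ᶜ = 0)
    (hFlt : ∀ i, ev (F i) < 1)
    (winner loser : (Fin N → Measure ℝ) → Fin N)
    (hwinner : ∀ P : Fin N → Measure ℝ, ∀ j, ev (P j) ≤ ev (P (winner P)))
    (hloser : ∀ P : Fin N → Measure ℝ, loser P ≠ winner P ∧
      ∀ j, j ≠ winner P → ev (P j) ≤ ev (P (loser P)))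
    -- expected payoff of player i (true distribution F i) in report profile P:
    -- the winner receives 1 up front and expects to pay λ(1 − E[X_i]);
    -- losers get 0
    (payoff : Fin N → (Fin N → Measure ℝ) → ℝ)
    (hpayoff : ∀ i P, payoff i P =
      if winner P = i then
        1 - (1 / (1 - ev (P (loser P)))) * (1 - ev (F i))
      else 0)
    -- an arbitrary report profile: R j is any report of player j (R i a deviation)
    (R : Fin N → Measure ℝ)
    (hRprob : ∀ i, IsProbabilityMeasure (R i))
    (hRsupp : ∀ i, (R i) (Set.Icc (0:ℝ) 1)ᶜ = 0)
    (hRlt : ∀ i, ev (R i) < 1)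
    (i : Fin N) :
    payoff i R ≤ payoff i (Function.update R i (F i)) :=
  ssp_incentive_compatible_general N F hFlt winner loser hwinner hloser payoff hpayoff R hRlt i
end

section
/- For any measurable objective function h: [0,1] → ℝ with finite expectation under all admissible distributions, the generalized SVCG mechanism—winner i' ∈ argmax_i ∫h(x) dF̂_i(x), winner pays ∫h(x) dF̂_{i''}(x) in advance and receives h(X_{i'}) after realization—is dominant-strategy incentive compatible: truthful reporting maximizes each player's expected payoff against any profile of others' reports. -/
/-!
The mechanism is a second-price auction in which player `i` bids the score `s (P i)` of its
report and values winning at the score `s m` of its true distribution `m`. A player's own report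
decides only whether it wins, never the price it pays, which is the highest rival score; and a
truthful report makes it win exactly when winning has nonnegative payoff.
-/

open MeasureTheory

section SecondPrice

variable {ι M : Type*} (s : M → ℝ) (winner loser : (ι → M) → ι)

def IsWinnerRule : Prop :=
  ∀ (P : ι → M) j, s (P j) ≤ s (P (winner P))

def IsMarginalLoserRule : Prop :=
  ∀ P : ι → M, loser P ≠ winner P ∧ ∀ j, j ≠ winner P → s (P j) ≤ s (P (loser P))

def svcgPayoff [DecidableEq ι] (v : ℝ) (i : ι) (P : ι → M) : ℝ :=
  if winner P = i then v - s (P (loser P)) else 0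

variable {s winner loser}

theorem loser_score_le_of_winner_eq
    (hl : IsMarginalLoserRule s winner loser)
    {P Q : ι → M} {i : ι} (hP : winner P = i) (hQ : winner Q = i)
    (hPQ : ∀ j, j ≠ i → P j = Q j) :
    s (P (loser P)) ≤ s (Q (loser Q)) := by
  have hne : loser P ≠ i := hP ▸ (hl P).1
  rw [hPQ _ hne]
  exact (hl Q).2 _ (hQ ▸ hne)

variable [DecidableEq ι]

theorem svcgPayoff_update_self_nonneg (hw : IsWinnerRule s winner)
    (R : ι → M) (i : ι) (m : M) :
    0 ≤ svcgPayoff s winner loser (s m) i (Function.update R i m) := by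
  set P := Function.update R i m
  unfold svcgPayoff
  split_ifs with hwin
  · have hprice : s (P (loser P)) ≤ s m := by
      simpa only [hwin, P, Function.update_self] using hw P (loser P)
    linarith
  · exact le_rfl

theorem score_le_loser_score_of_update_loses
    (hw : IsWinnerRule s winner)
    (hl : IsMarginalLoserRule s winner loser)
    {R : ι → M} {i : ι} {m : M} (hR : winner R = i)
    (hP : winner (Function.update R i m) ≠ i) :
    s m ≤ s (R (loser R)) := by
  set P := Function.update R i m
  calc s m = s (P i) := congrArg s (Function.update_self i m R).symm
    _ ≤ s (P (winner P)) := hw P i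
    _ = s (R (winner P)) := congrArg s (Function.update_of_ne hP m R)
    _ ≤ s (R (loser R)) := (hl R).2 _ (hR ▸ hP)

theorem svcgPayoff_le_svcgPayoff_update_self
    (hw : IsWinnerRule s winner)
    (hl : IsMarginalLoserRule s winner loser)
    (R : ι → M) (i : ι) (m : M) :
    svcgPayoff s winner loser (s m) i R ≤
      svcgPayoff s winner loser (s m) i (Function.update R i m) := by
  by_cases hR : winner R = i
  · by_cases hP : winner (Function.update R i m) = i
    · have hprice := loser_score_le_of_winner_eq hl hP hR
        (fun j hj => Function.update_of_ne hj m R)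
      simp only [svcgPayoff, hR, hP, if_true]
      linarith
    · have hloss := score_le_loser_score_of_update_loses hw hl hR hP
      simp only [svcgPayoff, hR, hP, if_true, if_false]
      linarith
  · simpa only [svcgPayoff, hR, if_false] using svcgPayoff_update_self_nonneg hw R i m

end SecondPrice

theorem generalized_svcg_incentive_compatible_general
    (N : ℕ) (h : ℝ → ℝ)
    (F : Fin N → Measure ℝ)
    (winner loser : (Fin N → Measure ℝ) → Fin N)
    (hwinner : ∀ P : Fin N → Measure ℝ, ∀ j,
      (∫ x, h x ∂(P j)) ≤ ∫ x, h x ∂(P (winner P)))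
    (hloser : ∀ P : Fin N → Measure ℝ, loser P ≠ winner P ∧
      ∀ j, j ≠ winner P → (∫ x, h x ∂(P j)) ≤ ∫ x, h x ∂(P (loser P)))
    -- expected payoff of player i (true distribution F i) in report profile P:
    -- the winner pays ∫ h d(report of marginal loser) in advance and receives
    -- h(X_i) after realization, so expects ∫ h dF_i; losers get 0
    (payoff : Fin N → (Fin N → Measure ℝ) → ℝ)
    (hpayoff : ∀ i P, payoff i P =
      if winner P = i then
        (∫ x, h x ∂(F i)) - ∫ x, h x ∂(P (loser P))
      else 0)
    (R : Fin N → Measure ℝ)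
    (i : Fin N) :
    payoff i R ≤ payoff i (Function.update R i (F i)) := by
  rw [hpayoff, hpayoff]
  exact svcgPayoff_le_svcgPayoff_update_self (s := fun μ => ∫ x, h x ∂μ) hwinner hloser R i (F i)

/-- The generalized SVCG mechanism with objective function h is
dominant-strategy incentive compatible. -/
theorem generalized_svcg_incentive_compatible
    (N : ℕ) (h : ℝ → ℝ) (hmeas : Measurable h)
    (F : Fin N → Measure ℝ)
    (hFprob : ∀ i, IsProbabilityMeasure (F i))
    (hFsupp : ∀ i, (F i) (Set.Icc (0:ℝ) 1)ᶜ = 0)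
    (hFint : ∀ i, Integrable h (F i))
    (winner loser : (Fin N → Measure ℝ) → Fin N)
    (hwinner : ∀ P : Fin N → Measure ℝ, ∀ j,
      (∫ x, h x ∂(P j)) ≤ ∫ x, h x ∂(P (winner P)))
    (hloser : ∀ P : Fin N → Measure ℝ, loser P ≠ winner P ∧
      ∀ j, j ≠ winner P → (∫ x, h x ∂(P j)) ≤ ∫ x, h x ∂(P (loser P)))
    -- expected payoff of player i (true distribution F i) in report profile P:
    -- the winner pays ∫ h d(report of marginal loser) in advance and receives
    -- h(X_i) after realization, so expects ∫ h dF_i; losers get 0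
    (payoff : Fin N → (Fin N → Measure ℝ) → ℝ)
    (hpayoff : ∀ i P, payoff i P =
      if winner P = i then
        (∫ x, h x ∂(F i)) - ∫ x, h x ∂(P (loser P))
      else 0)
    (R : Fin N → Measure ℝ)
    (hRprob : ∀ i, IsProbabilityMeasure (R i))
    (hRsupp : ∀ i, (R i) (Set.Icc (0:ℝ) 1)ᶜ = 0)
    (hRint : ∀ i, Integrable h (R i))
    (i : Fin N) :
    payoff i R ≤ payoff i (Function.update R i (F i)) :=
  generalized_svcg_incentive_compatible_general N h F winner loser hwinner hloser payoff hpayoff R i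
end

section
/- In the M-winner SVCG mechanism—players ranked by ∫h dF̂_i, the top M are winners, each winner pays ∫h(x) dF̂_{i_{(M+1)}}(x) in advance and receives h(X_i) after realization—truthful reporting is a dominant strategy for every player, for any h ∈ H. -/
/-!
Only player `i`'s report changes, and the winner sets before and after have the same size, so
any player `x` that drops out of the winners is replaced by some `j ≠ i` whose report is
unchanged: `x`'s new value is at most `j`'s, hence at most the old price. For `x = i` this says a
truthful loser would not have gained by winning; for the new marginal loser it says the truthful
price is at most the old one; and a truthful winner never pays more than its true value.
-/

open MeasureTheory Finset

theorem Finset.exists_mem_notMem_of_card_eq {ι : Type*} {s t : Finset ι} (hst : #s = #t)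
    {x : ι} (hxs : x ∈ s) (hxt : x ∉ t) : ∃ e ∈ t, e ∉ s := by
  by_contra! hts
  exact (card_lt_card ((ssubset_iff_of_subset hts).2 ⟨x, hxs, hxt⟩)).ne hst.symm

structure IsTopSelection {ι α : Type*} [Preorder α] (v : ι → α) (W : Finset ι) (m : ι) :
    Prop where
  le_of_mem_of_notMem : ∀ j ∈ W, ∀ k ∉ W, v k ≤ v j
  marginal_notMem : m ∉ W
  le_marginal : ∀ k ∉ W, v k ≤ v m

namespace IsTopSelection

variable {ι α : Type*} {v v' : ι → α} {W W' : Finset ι} {m m' i : ι}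

section Preorder

variable [Preorder α]

theorem marginal_le (hsel : IsTopSelection v W m) (hi : i ∈ W) : v m ≤ v i :=
  hsel.le_of_mem_of_notMem i hi m hsel.marginal_notMem

theorem le_marginal_of_mem_of_notMem (hsel : IsTopSelection v W m)
    (hsel' : IsTopSelection v' W' m') (hcard : #W = #W') (hv : ∀ k ≠ i, v' k = v k)
    (hi : i ∈ W) {x : ι} (hxW : x ∈ W) (hxW' : x ∉ W') : v' x ≤ v m := by
  obtain ⟨j, hjW', hjW⟩ := exists_mem_notMem_of_card_eq hcard hxW hxW'
  have hji : j ≠ i := fun hj => hjW (hj ▸ hi)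
  calc v' x ≤ v' j := hsel'.le_of_mem_of_notMem j hjW' x hxW'
    _ = v j := hv j hji
    _ ≤ v m := hsel.le_marginal j hjW

theorem marginal_le_marginal (hsel : IsTopSelection v W m)
    (hsel' : IsTopSelection v' W' m') (hcard : #W = #W') (hv : ∀ k ≠ i, v' k = v k)
    (hi : i ∈ W) (hi' : i ∈ W') : v' m' ≤ v m := by
  by_cases hm'W : m' ∈ W
  · exact hsel.le_marginal_of_mem_of_notMem hsel' hcard hv hi hm'W hsel'.marginal_notMem
  · have hm'i : m' ≠ i := fun hm' => hsel'.marginal_notMem (hm' ▸ hi')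
    exact (hv m' hm'i).trans_le (hsel.le_marginal m' hm'W)

end Preorder

/-- `v' i` is player `i`'s true value, reported truthfully under `v'`. -/
theorem payoff_le_truthful [DecidableEq ι] [AddCommGroup α] [PartialOrder α] [IsOrderedAddMonoid α]
    (hsel : IsTopSelection v W m) (hsel' : IsTopSelection v' W' m') (hcard : #W = #W')
    (hv : ∀ k ≠ i, v' k = v k) :
    (if i ∈ W then v' i - v m else 0) ≤ (if i ∈ W' then v' i - v' m' else 0) := by
  by_cases hi : i ∈ W <;> by_cases hi' : i ∈ W' <;> simp only [hi, hi', if_true, if_false]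
  · exact sub_le_sub_left (hsel.marginal_le_marginal hsel' hcard hv hi hi') _
  · exact sub_nonpos.2 (hsel.le_marginal_of_mem_of_notMem hsel' hcard hv hi hi hi')
  · exact sub_nonneg.2 (hsel'.marginal_le hi')
  · exact le_rfl

end IsTopSelection

theorem m_svcg_incentive_compatible_general
    (N M : ℕ)
    (h : ℝ → ℝ)
    (F : Fin N → Measure ℝ)
    -- the set of M winners and the marginal loser, for every report profile
    (winners : (Fin N → Measure ℝ) → Finset (Fin N))
    (mloser : (Fin N → Measure ℝ) → Fin N)
    (hcard : ∀ P, (winners P).card = M)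
    (hwinners : ∀ P : Fin N → Measure ℝ, ∀ j ∈ winners P, ∀ k ∉ winners P,
      (∫ x, h x ∂(P k)) ≤ ∫ x, h x ∂(P j))
    (hmloser : ∀ P : Fin N → Measure ℝ, mloser P ∉ winners P ∧
      ∀ k ∉ winners P, (∫ x, h x ∂(P k)) ≤ ∫ x, h x ∂(P (mloser P)))
    -- expected payoff of player i (true distribution F i) in report profile P
    (payoff : Fin N → (Fin N → Measure ℝ) → ℝ)
    (hpayoff : ∀ i P, payoff i P =
      if i ∈ winners P then
        (∫ x, h x ∂(F i)) - ∫ x, h x ∂(P (mloser P))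
      else 0)
    (R : Fin N → Measure ℝ)
    (i : Fin N) :
    payoff i R ≤ payoff i (Function.update R i (F i)) := by
  set Q := Function.update R i (F i)
  have hsel : ∀ P, IsTopSelection (fun k => ∫ x, h x ∂(P k)) (winners P) (mloser P) :=
    fun P => ⟨hwinners P, (hmloser P).1, (hmloser P).2⟩
  have hQ : ∀ k ≠ i, Q k = R k := fun k hk => Function.update_of_ne hk _ _
  have hQi : Q i = F i := Function.update_self i (F i) R
  rw [hpayoff, hpayoff, ← hQi]
  exact (hsel R).payoff_le_truthful (hsel Q) ((hcard R).trans (hcard Q).symm)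
    fun k hk => congrArg (fun μ => ∫ x, h x ∂μ) (hQ k hk)

/-- The M-winner SVCG mechanism (top M bidders by ∫ h dF̂ win; each
winner pays the (M+1)-th highest reported value in advance and receives h(X_i)
after realization) is dominant-strategy incentive compatible. -/
theorem m_svcg_incentive_compatible
    (N M : ℕ) (hMN : M < N)
    (h : ℝ → ℝ) (hmeas : Measurable h)
    (F : Fin N → Measure ℝ)
    (hFprob : ∀ i, IsProbabilityMeasure (F i))
    (hFsupp : ∀ i, (F i) (Set.Icc (0:ℝ) 1)ᶜ = 0)
    (hFint : ∀ i, Integrable h (F i))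
    -- the set of M winners and the marginal loser, for every report profile
    (winners : (Fin N → Measure ℝ) → Finset (Fin N))
    (mloser : (Fin N → Measure ℝ) → Fin N)
    (hcard : ∀ P, (winners P).card = M)
    (hwinners : ∀ P : Fin N → Measure ℝ, ∀ j ∈ winners P, ∀ k ∉ winners P,
      (∫ x, h x ∂(P k)) ≤ ∫ x, h x ∂(P j))
    (hmloser : ∀ P : Fin N → Measure ℝ, mloser P ∉ winners P ∧
      ∀ k ∉ winners P, (∫ x, h x ∂(P k)) ≤ ∫ x, h x ∂(P (mloser P)))
    -- expected payoff of player i (true distribution F i) in report profile P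
    (payoff : Fin N → (Fin N → Measure ℝ) → ℝ)
    (hpayoff : ∀ i P, payoff i P =
      if i ∈ winners P then
        (∫ x, h x ∂(F i)) - ∫ x, h x ∂(P (mloser P))
      else 0)
    (R : Fin N → Measure ℝ)
    (hRprob : ∀ i, IsProbabilityMeasure (R i))
    (hRsupp : ∀ i, (R i) (Set.Icc (0:ℝ) 1)ᶜ = 0)
    (hRint : ∀ i, Integrable h (R i))
    (i : Fin N) :
    payoff i R ≤ payoff i (Function.update R i (F i)) :=
  m_svcg_incentive_compatible_general N M h F winners mloser hcard hwinners hmloser payoff hpayoff R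
    i
end

section
/- Truthful reporting is NOT in general a dominant strategy for a TSO in the TSVCG mechanism: a TSO's best response depends on the generators' reported distributions, so there exist generator reports against which a TSO strictly benefits from misreporting his cost function. -/
open MeasureTheory

/-- Reported expected net surplus of the pair (generator i, TSO j). -/
noncomputable def surplus {N M : ℕ} (Fh : Fin N → Measure ℝ)
    (ch : Fin M → ℝ → ℝ) (i : Fin N) (j : Fin M) : ℝ :=
  ∫ x, (x - ch j x) ∂(Fh i)

/-!
A generator that reports output `δ₁` while truly producing `δ₀` fools the mechanism. Let TSO `0`
have true cost `c(x) = x` and its rival the constant cost `1/2`. Reporting truthfully, TSO `0`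
shows reported surplus `0 < 1/2`, loses, and earns `0`. Reporting zero cost instead, it wins
with surplus `1`, is paid `∫ x dδ₁ − s⁻⁰ = 1 − 1/2` up front, and then bears its true cost only
under the true distribution `δ₀`, which is `0`: its payoff rises to `1/2`.
-/

namespace TSVCG

open Finset

variable {N M : ℕ}

theorem surplus_dirac (a : ℝ) (cr : Fin M → ℝ → ℝ) (i : Fin N) (j : Fin M) :
    surplus (fun _ => Measure.dirac a) cr i j = a - cr j a :=
  integral_dirac _ a

section Winner

variable [NeZero N] [NeZero M]

noncomputable def winner (Fr : Fin N → Measure ℝ) (cr : Fin M → ℝ → ℝ) : Fin N × Fin M :=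
  (univ.exists_max_image (fun p => surplus Fr cr p.1 p.2) univ_nonempty).choose

theorem surplus_le_surplus_winner (Fr : Fin N → Measure ℝ) (cr : Fin M → ℝ → ℝ)
    (i : Fin N) (j : Fin M) :
    surplus Fr cr i j ≤ surplus Fr cr (winner Fr cr).1 (winner Fr cr).2 :=
  (univ.exists_max_image (fun p => surplus Fr cr p.1 p.2) univ_nonempty).choose_spec.2
    (i, j) (mem_univ _)

theorem winner_eq_of_forall_lt {Fr : Fin N → Measure ℝ} {cr : Fin M → ℝ → ℝ}
    {p : Fin N × Fin M} (h : ∀ q ≠ p, surplus Fr cr q.1 q.2 < surplus Fr cr p.1 p.2) :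
    winner Fr cr = p := by
  by_contra hne
  exact (surplus_le_surplus_winner Fr cr p.1 p.2).not_gt (h _ hne)

end Winner

section SecondPrice

variable [NeZero N] [Nontrivial (Fin M)]

theorem nonempty_filter_snd_ne (j : Fin M) :
    (univ.filter fun p : Fin N × Fin M => p.2 ≠ j).Nonempty :=
  let ⟨j', hj'⟩ := exists_ne j
  ⟨(0, j'), mem_filter.2 ⟨mem_univ _, hj'⟩⟩

/-- The paper's `s⁻ʲ`. -/
noncomputable def surplusWithout (Fr : Fin N → Measure ℝ) (cr : Fin M → ℝ → ℝ) (j : Fin M) : ℝ :=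
  (univ.filter fun p : Fin N × Fin M => p.2 ≠ j).sup' (nonempty_filter_snd_ne j)
    fun p => surplus Fr cr p.1 p.2

theorem exists_surplusWithout_eq (Fr : Fin N → Measure ℝ) (cr : Fin M → ℝ → ℝ) (j : Fin M) :
    ∃ (i : Fin N) (j' : Fin M), j' ≠ j ∧ surplusWithout Fr cr j = surplus Fr cr i j' := by
  obtain ⟨p, hp, hmax⟩ := exists_mem_eq_sup' (nonempty_filter_snd_ne j)
    fun p : Fin N × Fin M => surplus Fr cr p.1 p.2
  exact ⟨p.1, p.2, (mem_filter.1 hp).2, hmax⟩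

theorem surplus_le_surplusWithout (Fr : Fin N → Measure ℝ) (cr : Fin M → ℝ → ℝ)
    {j : Fin M} (i : Fin N) {j' : Fin M} (hj' : j' ≠ j) :
    surplus Fr cr i j' ≤ surplusWithout Fr cr j :=
  le_sup' (fun p : Fin N × Fin M => surplus Fr cr p.1 p.2) (b := (i, j'))
    (mem_filter.2 ⟨mem_univ _, hj'⟩)

theorem surplusWithout_zero_eq (Fr : Fin 1 → Measure ℝ) (cr : Fin 2 → ℝ → ℝ) :
    surplusWithout Fr cr 0 = surplus Fr cr 0 1 := by
  obtain ⟨i, j', hj', h⟩ := exists_surplusWithout_eq Fr cr 0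
  rwa [Subsingleton.elim i 0, Fin.eq_one_of_ne_zero j' hj'] at h

end SecondPrice

section Payoff

variable [NeZero N] [NeZero M] [Nontrivial (Fin M)]

noncomputable def tsoPayoff (F : Fin N → Measure ℝ) (c : Fin M → ℝ → ℝ) (j : Fin M)
    (Fr : Fin N → Measure ℝ) (cr : Fin M → ℝ → ℝ) : ℝ :=
  if (winner Fr cr).2 = j then
    (∫ x, x ∂(Fr (winner Fr cr).1)) - surplusWithout Fr cr j - ∫ x, c j x ∂(F (winner Fr cr).1)
  else 0

end Payoff

noncomputable def exampleCost : Fin 2 → ℝ → ℝ := ![id, fun _ => 1 / 2]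

theorem winner_exampleCost :
    winner (fun _ : Fin 1 => Measure.dirac 1) exampleCost = (0, 1) := by
  refine winner_eq_of_forall_lt fun q hq => ?_
  fin_cases q <;> norm_num [surplus_dirac, exampleCost] at *

theorem winner_update_exampleCost_zero :
    winner (fun _ : Fin 1 => Measure.dirac 1) (Function.update exampleCost 0 0) = (0, 0) := by
  refine winner_eq_of_forall_lt fun q hq => ?_
  fin_cases q <;> norm_num [surplus_dirac, exampleCost] at *

theorem tsoPayoff_exampleCost (F : Fin 1 → Measure ℝ) :
    tsoPayoff F exampleCost 0 (fun _ : Fin 1 => Measure.dirac 1) exampleCost = 0 := by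
  simp [tsoPayoff, winner_exampleCost]

theorem tsoPayoff_update_exampleCost_zero :
    tsoPayoff (fun _ : Fin 1 => Measure.dirac 0) exampleCost 0 (fun _ => Measure.dirac 1)
      (Function.update exampleCost 0 0) = 1 / 2 := by
  rw [tsoPayoff, winner_update_exampleCost_zero, surplusWithout_zero_eq, surplus_dirac]
  norm_num [integral_dirac, exampleCost]

end TSVCG

/-- Truthful reporting is NOT in general a dominant strategy for
a TSO in the TSVCG mechanism: there is an instance (generators' true and
reported distributions, TSOs' true costs, and a valid winner/surplus
structure) in which some TSO strictly increases his expected payoff by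
misreporting his cost function against the given generator reports. -/
theorem tsvcg_tso_truthful_not_dominant :
    ∃ (N M : ℕ) (F Fh : Fin N → Measure ℝ) (c : Fin M → ℝ → ℝ)
      (w : (Fin N → Measure ℝ) → (Fin M → ℝ → ℝ) → Fin N × Fin M)
      (sTso : (Fin N → Measure ℝ) → (Fin M → ℝ → ℝ) → Fin M → ℝ)
      (tsoPayoff : Fin M → (Fin N → Measure ℝ) → (Fin M → ℝ → ℝ) → ℝ)
      (j : Fin M) (cdev : ℝ → ℝ),
      -- true and reported distributions are admissible
      (∀ i, IsProbabilityMeasure (F i)) ∧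
      (∀ i, (F i) (Set.Icc (0:ℝ) 1)ᶜ = 0) ∧
      (∀ i, IsProbabilityMeasure (Fh i)) ∧
      (∀ i, (Fh i) (Set.Icc (0:ℝ) 1)ᶜ = 0) ∧
      -- the winning pair maximizes reported expected net surplus
      (∀ Fr cr, ∀ (i : Fin N) (j' : Fin M),
        surplus Fr cr i j' ≤ surplus Fr cr (w Fr cr).1 (w Fr cr).2) ∧
      -- s^{−j} is the maximal reported surplus with TSO j absent
      (∀ Fr cr j',
        (∃ (i : Fin N) (j'' : Fin M), j'' ≠ j' ∧
          sTso Fr cr j' = surplus Fr cr i j'') ∧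
        ∀ (i : Fin N) (j'' : Fin M), j'' ≠ j' →
          surplus Fr cr i j'' ≤ sTso Fr cr j') ∧
      -- the TSO's expected payoff: paid ∫ x dF̂_{i'} − s^{−j} up front and
      -- incurring the expected true cost under the winner's TRUE distribution
      (∀ j' Fr cr, tsoPayoff j' Fr cr =
        if (w Fr cr).2 = j' then
          (∫ x, x ∂(Fr (w Fr cr).1)) - sTso Fr cr j' -
            ∫ x, c j' x ∂(F (w Fr cr).1)
        else 0) ∧
      -- misreporting cdev is strictly profitable for TSO j against reports Fh
      tsoPayoff j Fh c < tsoPayoff j Fh (Function.update c j cdev) := by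
  have supported_dirac {a : ℝ} (ha : a ∈ Set.Icc (0 : ℝ) 1) :
      Measure.dirac a (Set.Icc (0 : ℝ) 1)ᶜ = 0 :=
    (dirac_eq_zero_iff_not_mem measurableSet_Icc.compl).2 (not_not.2 ha)
  refine ⟨1, 2, fun _ => Measure.dirac 0, fun _ => Measure.dirac 1, TSVCG.exampleCost,
    TSVCG.winner, TSVCG.surplusWithout,
    TSVCG.tsoPayoff (fun _ => Measure.dirac 0) TSVCG.exampleCost, 0, 0,
    fun _ => inferInstance, fun _ => supported_dirac (by norm_num),
    fun _ => inferInstance, fun _ => supported_dirac (by norm_num),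
    TSVCG.surplus_le_surplus_winner,
    fun Fr cr j => ⟨TSVCG.exists_surplusWithout_eq Fr cr j,
      fun i _ hj => TSVCG.surplus_le_surplusWithout Fr cr i hj⟩,
    fun _ _ _ => rfl, ?_⟩
  rw [TSVCG.tsoPayoff_exampleCost, TSVCG.tsoPayoff_update_exampleCost_zero]
  norm_num
end
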